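/- Let G be a k-regular k-connected simple graph with k ≥ 3 and |V(G)| ≥ 2(k−h)+3, where 0 ≤ h ≤ ⌊(k−1)/2⌋. Then the h-edge tolerable diagnosability of G under the MM* model equals k − h. -/

import Mathlib

open SimpleGraph Finset

variable {V : Type*}

/-- The vertex connectivity of a finite simple graph: the minimum size of a vertex set
whose removal leaves a graph that is disconnected or has at most one vertex. -/
noncomputable def vConn [Fintype V] (G : SimpleGraph V) : ℕ :=
  sInf {n | ∃ S : Finset V, S.card = n ∧
    (((↑S : Set V)ᶜ).Subsingleton ∨ ¬ (G.induce ((↑S : Set V)ᶜ)).Connected)}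


/-- Two fault sets are distinguishable under the MM* model (Sengupta–Dahbura). -/
def mmDistinguishable [DecidableEq V] (G : SimpleGraph V) (F1 F2 : Finset V) : Prop :=
  (∃ u w v : V, u ∉ F1 ∪ F2 ∧ w ∉ F1 ∪ F2 ∧ v ∈ (F1 \ F2) ∪ (F2 \ F1) ∧ G.Adj u v ∧ G.Adj u w) ∨
  (∃ u v w : V, u ∈ F1 \ F2 ∧ v ∈ F1 \ F2 ∧ u ≠ v ∧ w ∉ F1 ∪ F2 ∧ G.Adj u w ∧ G.Adj v w) ∨
  (∃ u v w : V, u ∈ F2 \ F1 ∧ v ∈ F2 \ F1 ∧ u ≠ v ∧ w ∉ F1 ∪ F2 ∧ G.Adj u w ∧ G.Adj v w)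

/-- A graph is $s$-diagnosable under the MM* model. -/
def mmDiagnosable [DecidableEq V] (G : SimpleGraph V) (s : ℕ) : Prop :=
  ∀ F1 F2 : Finset V, F1 ≠ F2 → F1.card ≤ s → F2.card ≤ s → mmDistinguishable G F1 F2

/-- The $h$-edge tolerable diagnosability under the MM* model. -/
noncomputable def mmTolDiag [Fintype V] [DecidableEq V] (G : SimpleGraph V) (h : ℕ) : ℕ :=
  sSup {s | ∀ Fe : Finset (Sym2 V), ↑Fe ⊆ G.edgeSet → Fe.card ≤ h →
    mmDiagnosable (G.deleteEdges ↑Fe) s}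

/-!
Let `H = G - F_e` with `|F_e| ≤ h`, and let `F₁ ≠ F₂` have at most `k - h` vertices each. Suppose
they are indistinguishable in `H`. If some vertex `q ∉ F₁ ∪ F₂` has no `H`-neighbour in `F₁ △ F₂`,
then `F₁ ∩ F₂` and `F_e` together separate `F₁ △ F₂` from `q` (the `H`-neighbours of `F₁ △ F₂`
outside `F₁ ∪ F₂` have no further neighbours outside `F₁ ∪ F₂`); replacing each deleted crossing
edge by one of its endpoints gives a vertex cut of size at most `|F₁ ∩ F₂| + |F_e| < k`.
Otherwise every vertex outside `F₁ ∪ F₂` has all its `H`-neighbours in `F₁ ∪ F₂`, at most one in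
each of `F₁ - F₂` and `F₂ - F₁`, and double counting these edges against `k`-regularity
contradicts `|V| ≥ 2(k - h) + 3`. Conversely, after deleting `h` edges at a vertex `v`, its
remaining neighbourhood `N` and `N ∪ {v}` are indistinguishable, so `t_h^e(G) ≤ k - h`.
-/

lemma Finset.sum_card_filter_mem_le {α : Type*} [DecidableEq α] (Fe : Finset (Sym2 α))
    (X : Finset α) : ∑ v ∈ X, #{e ∈ Fe | v ∈ e} ≤ 2 * #Fe := by
  have h := sum_card_bipartiteAbove_eq_sum_card_bipartiteBelow (fun v (e : Sym2 α) => v ∈ e)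
    (s := X) (t := Fe)
  simp only [bipartiteAbove, bipartiteBelow] at h
  rw [h, mul_comm, ← smul_eq_mul]
  refine sum_le_card_nsmul _ _ _ fun e _ => ?_
  calc #{v ∈ X | v ∈ e} ≤ #e.toFinset :=
        card_le_card fun v hv => Sym2.mem_toFinset.mpr (mem_filter.mp hv).2
    _ ≤ 2 := by rw [Sym2.card_toFinset]; split_ifs <;> omega

namespace SimpleGraph

lemma not_connected_induce_of_closed {G : SimpleGraph V} {s P : Set V} {p q : V}
    (hp : p ∈ s) (hq : q ∈ s) (hpP : p ∈ P) (hqP : q ∉ P)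
    (hP : ∀ x y, x ∈ s → y ∈ s → x ∈ P → G.Adj x y → y ∈ P) :
    ¬ (G.induce s).Connected := by
  intro hc
  have hwalk : ∀ (a b : s), (G.induce s).Walk a b → (a : V) ∈ P → (b : V) ∈ P := by
    intro a b w
    induction w with
    | nil => exact id
    | cons hadj _ ih => exact fun ha => ih (hP _ _ (Subtype.mem _) (Subtype.mem _) ha hadj)
  obtain ⟨w⟩ := hc.preconnected ⟨p, hp⟩ ⟨q, hq⟩
  exact hqP (hwalk _ _ w hpP)

def CrossingEdgesIn (G : SimpleGraph V) (P : Set V) (C : Finset V) (Fe : Finset (Sym2 V)) :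
    Prop :=
  ∀ x y, x ∈ P → x ∉ C → y ∉ P → y ∉ C → G.Adj x y → s(x, y) ∈ Fe

lemma CrossingEdgesIn.insert_endpoint [DecidableEq V] {G : SimpleGraph V} {P : Set V}
    {C : Finset V} {Fe : Finset (Sym2 V)} {x y z : V}
    (hcross : CrossingEdgesIn G P C (insert s(x, y) Fe)) (hyP : y ∉ P) (hz : z = x ∨ z = y) :
    CrossingEdgesIn G P (insert z C) Fe := by
  intro a b haP haC hbP hbC hab
  rw [mem_insert, not_or] at haC hbC
  rcases mem_insert.mp (hcross a b haP haC.2 hbP hbC.2 hab) with hab' | hab'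
  · rcases Sym2.eq_iff.mp hab' with ⟨rfl, rfl⟩ | ⟨rfl, -⟩
    · rcases hz with rfl | rfl
      exacts [absurd rfl haC.1, absurd rfl hbC.1]
    · exact absurd haP hyP
  · exact hab'

section Finite

variable [Fintype V]

lemma vConn_le_card_of_subsingleton {G : SimpleGraph V} {C : Finset V}
    (hC : ((↑C : Set V)ᶜ).Subsingleton) : vConn G ≤ #C :=
  Nat.sInf_le ⟨C, rfl, Or.inl hC⟩

lemma vConn_le_card_of_not_connected {G : SimpleGraph V} {C : Finset V}
    (hC : ¬ (G.induce (↑C : Set V)ᶜ).Connected) : vConn G ≤ #C :=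
  Nat.sInf_le ⟨C, rfl, Or.inr hC⟩

variable [DecidableEq V]

theorem vConn_le_card_add_card {G : SimpleGraph V} {P : Set V} {Fe : Finset (Sym2 V)} :
    ∀ {C : Finset V} {p q : V}, CrossingEdgesIn G P C Fe → p ∈ P → q ∉ P → p ∉ C → q ∉ C →
      vConn G ≤ #C + #Fe := by
  induction Fe using Finset.induction_on with
  | empty =>
    intro C p q hcross hp hq hpC hqC
    refine vConn_le_card_of_not_connected <|
      not_connected_induce_of_closed (p := p) (q := q) hpC hqC hp hq fun x y hx hy hxP hxy => ?_
    by_contra hyP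
    simpa using hcross x y hxP hx hyP hy hxy
  | insert e Fe he ih =>
    intro C p q hcross hp hq hpC hqC
    rw [card_insert_of_notMem he]
    by_cases hnew : CrossingEdgesIn G P C Fe
    · linarith [ih hnew hp hq hpC hqC]
    obtain ⟨x, y, hxP, hxC, hyP, hyC, hxy, hxyFe⟩ : ∃ x y, x ∈ P ∧ x ∉ C ∧ y ∉ P ∧ y ∉ C ∧
        G.Adj x y ∧ s(x, y) ∉ Fe := by
      simpa [CrossingEdgesIn] using hnew
    obtain rfl : s(x, y) = e := by simpa [hxyFe] using hcross x y hxP hxC hyP hyC hxy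
    -- `e` is removed with one endpoint, unless that leaves one side empty; if both ends are the
    -- only vertices of their sides, `insert x C` leaves at most one vertex
    have hdel : ∀ z p' q', z = x ∨ z = y → p' ∈ P → q' ∉ P → p' ∉ insert z C →
        q' ∉ insert z C → vConn G ≤ #C + (#Fe + 1) := fun z p' q' hz hp' hq' hp'C hq'C =>
      (ih (hcross.insert_endpoint hyP hz) hp' hq' hp'C hq'C).trans
        (by linarith [card_insert_le z C])
    by_cases hp' : ∃ p' ∈ P, p' ∉ C ∧ p' ≠ x
    · obtain ⟨p', hp'P, hp'C, hp'x⟩ := hp'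
      exact hdel x p' q (.inl rfl) hp'P hq (by simp [hp'C, hp'x])
        (by simp [hqC]; rintro rfl; exact hq hxP)
    by_cases hq' : ∃ q' ∉ P, q' ∉ C ∧ q' ≠ y
    · obtain ⟨q', hq'P, hq'C, hq'y⟩ := hq'
      exact hdel y p q' (.inr rfl) hp hq'P (by simp [hpC]; rintro rfl; exact hyP hp)
        (by simp [hq'C, hq'y])
    push Not at hp' hq'
    have hy : ∀ z, z ∉ insert x C → z = y := by
      intro z hz
      rw [mem_insert, not_or] at hz
      by_cases hzP : z ∈ P
      · exact absurd (hp' z hzP hz.2) hz.1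
      · exact hq' z hzP hz.2
    refine (vConn_le_card_of_subsingleton (C := insert x C) fun a ha b hb => ?_).trans
      (by linarith [card_insert_le x C])
    rw [Set.mem_compl_iff, mem_coe] at ha hb
    rw [hy a ha, hy b hb]

section Degree

variable {G : SimpleGraph V} [DecidableRel G.Adj]

lemma degree_deleteEdges_add_card_filter_mem {Fe : Finset (Sym2 V)} (hFe : ↑Fe ⊆ G.edgeSet)
    (v : V) : (G.deleteEdges ↑Fe).degree v + #{e ∈ Fe | v ∈ e} = G.degree v := by
  have hinc : (G.deleteEdges ↑Fe).incidenceFinset v = G.incidenceFinset v \ Fe := by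
    ext e; simp [incidenceSet, edgeSet_deleteEdges, and_right_comm]
  have hFe' : {e ∈ Fe | v ∈ e} = G.incidenceFinset v ∩ Fe := by
    ext e
    simp only [mem_filter, mem_inter, mem_incidenceFinset, incidenceSet, Set.mem_ofPred_eq]
    exact ⟨fun h => ⟨⟨hFe h.1, h.2⟩, h.1⟩, fun h => ⟨h.2, h.1.2⟩⟩
  rw [← card_incidenceFinset_eq_degree, ← card_incidenceFinset_eq_degree, hinc, hFe',
    card_sdiff_add_card_inter]

lemma exists_deleteEdges_degree_add_eq {h : ℕ} (v : V) (hh : h ≤ G.degree v) :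
    ∃ Fe : Finset (Sym2 V), ↑Fe ⊆ G.edgeSet ∧ #Fe = h ∧
      (G.deleteEdges ↑Fe).degree v + h = G.degree v := by
  obtain ⟨Fe, hsub, hcard⟩ :=
    exists_subset_card_eq (hh.trans_eq (card_incidenceFinset_eq_degree G v).symm)
  have hinc : ∀ e ∈ Fe, e ∈ G.incidenceSet v :=
    fun e he => (mem_incidenceFinset _ _ _).mp (hsub he)
  have hFeE : ↑Fe ⊆ G.edgeSet := fun e he => (hinc e he).1
  refine ⟨Fe, hFeE, hcard, ?_⟩
  rw [← degree_deleteEdges_add_card_filter_mem hFeE v,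
    filter_true_of_mem fun e he => (hinc e he).2, hcard]

lemma sum_card_neighborFinset_inter_le {k : ℕ} (hdeg : ∀ v, G.degree v ≤ k) (W X : Finset V) :
    ∑ u ∈ W, #(G.neighborFinset u ∩ X) ≤ k * #X := by
  have h := sum_card_bipartiteAbove_eq_sum_card_bipartiteBelow G.Adj (s := W) (t := X)
  simp only [bipartiteAbove, bipartiteBelow] at h
  calc ∑ u ∈ W, #(G.neighborFinset u ∩ X) = ∑ x ∈ X, #{u ∈ W | G.Adj u x} := by
        rw [← h]; congr! 2 with u; ext; simp [and_comm]
    _ ≤ ∑ x ∈ X, G.degree x := by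
        gcongr with x
        rw [← card_neighborFinset_eq_degree]
        exact card_le_card fun u hu => by simpa [adj_comm] using (mem_filter.mp hu).2
    _ ≤ k * #X := by
        rw [mul_comm, ← smul_eq_mul]; exact sum_le_card_nsmul _ _ _ fun x _ => hdeg x

end Degree

end Finite

section MMStar

variable [DecidableEq V] {H : SimpleGraph V} {F1 F2 : Finset V}

lemma mmDistinguishable_comm : mmDistinguishable H F1 F2 ↔ mmDistinguishable H F2 F1 := by
  unfold mmDistinguishable
  rw [union_comm F2 F1, union_comm (F2 \ F1)]
  exact or_congr_right or_comm

lemma not_adj_of_not_mmDistinguishable (hnd : ¬ mmDistinguishable H F1 F2) {u v w : V}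
    (hu : u ∉ F1 ∪ F2) (hw : w ∉ F1 ∪ F2) (hv : v ∈ (F1 \ F2) ∪ (F2 \ F1)) (huv : H.Adj u v) :
    ¬ H.Adj u w :=
  fun huw => hnd (Or.inl ⟨u, w, v, hu, hw, hv, huv, huw⟩)

lemma card_neighborFinset_inter_sdiff_le_one (hnd : ¬ mmDistinguishable H F1 F2) {u : V}
    [Fintype (H.neighborSet u)] (hu : u ∉ F1 ∪ F2) : #(H.neighborFinset u ∩ (F1 \ F2)) ≤ 1 := by
  refine card_le_one.mpr fun a ha b hb => ?_
  rw [mem_inter, mem_neighborFinset] at ha hb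
  by_contra hab
  exact hnd (Or.inr (Or.inl ⟨a, b, u, ha.2, hb.2, hab, hu, ha.1.symm, hb.1.symm⟩))

lemma neighborFinset_subset_of_not_mmDistinguishable (hnd : ¬ mmDistinguishable H F1 F2) {u : V}
    [Fintype (H.neighborSet u)] (hu : u ∉ F1 ∪ F2)
    (huD : ∃ v ∈ (F1 \ F2) ∪ (F2 \ F1), H.Adj u v) : H.neighborFinset u ⊆ F1 ∪ F2 := by
  obtain ⟨v, hv, huv⟩ := huD
  intro w hw
  by_contra hw'
  exact not_adj_of_not_mmDistinguishable hnd hu hw' hv huv ((mem_neighborFinset _ _ _).mp hw)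

lemma degree_le_card_neighborFinset_inter_add_two [Fintype V] [DecidableRel H.Adj]
    (hnd : ¬ mmDistinguishable H F1 F2) {u : V} (hu : u ∉ F1 ∪ F2)
    (huD : ∃ v ∈ (F1 \ F2) ∪ (F2 \ F1), H.Adj u v) :
    H.degree u ≤ #(H.neighborFinset u ∩ (F1 ∩ F2)) + 2 := by
  set N := H.neighborFinset u
  have hA := card_neighborFinset_inter_sdiff_le_one hnd hu
  have hB := card_neighborFinset_inter_sdiff_le_one (mmDistinguishable_comm.not.mp hnd)
    (union_comm F1 F2 ▸ hu)
  have hsplit : N ⊆ (N ∩ (F1 ∩ F2)) ∪ (N ∩ (F1 \ F2)) ∪ (N ∩ (F2 \ F1)) := by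
    intro x hx
    have := neighborFinset_subset_of_not_mmDistinguishable hnd hu huD hx
    simp only [mem_inter, mem_union, mem_sdiff] at this ⊢
    tauto
  rw [← card_neighborFinset_eq_degree]
  linarith [card_le_card hsplit, card_union_le (N ∩ (F1 ∩ F2) ∪ N ∩ (F1 \ F2)) (N ∩ (F2 \ F1)),
    card_union_le (N ∩ (F1 ∩ F2)) (N ∩ (F1 \ F2))]

lemma not_mmDistinguishable_neighborFinset_insert (v : V) [Fintype (H.neighborSet v)] :
    ¬ mmDistinguishable H (H.neighborFinset v) (insert v (H.neighborFinset v)) := by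
  have hsub : H.neighborFinset v \ insert v (H.neighborFinset v) = ∅ :=
    sdiff_eq_empty_iff_subset.mpr (subset_insert _ _)
  rintro (⟨u, -, x, hu, -, hx, hux, -⟩ | ⟨a, -, -, ha, -⟩ | ⟨a, b, -, ha, hb, hab, -⟩)
  · rw [hsub, empty_union, mem_sdiff, mem_insert] at hx
    rw [hx.1.resolve_right hx.2] at hux
    exact hu (mem_union_left _ ((mem_neighborFinset _ _ _).mpr hux.symm))
  · simp [hsub] at ha
  · simp only [mem_sdiff, mem_insert] at ha hb
    exact hab ((ha.1.resolve_right ha.2).trans (hb.1.resolve_right hb.2).symm)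

lemma not_mmDiagnosable_of_degree_lt [Fintype V] [DecidableRel H.Adj] {v : V} {s : ℕ}
    (hs : H.degree v < s) : ¬ mmDiagnosable H s := by
  have hv : v ∉ H.neighborFinset v := by simp
  intro hdiag
  refine not_mmDistinguishable_neighborFinset_insert v
    (hdiag _ _ (ne_insert_of_notMem _ _ hv) ?_ ?_)
  · rw [card_neighborFinset_eq_degree]; exact hs.le
  · rw [card_insert_of_notMem hv, card_neighborFinset_eq_degree]; exact hs

end MMStar

section DeleteEdges

variable [Fintype V] [DecidableEq V] {G : SimpleGraph V} {Fe : Finset (Sym2 V)}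
  {F1 F2 : Finset V}

lemma vConn_le_of_not_mmDistinguishable (hnd : ¬ mmDistinguishable (G.deleteEdges ↑Fe) F1 F2)
    {p q : V} (hp : p ∈ (F1 \ F2) ∪ (F2 \ F1)) (hq : q ∉ F1 ∪ F2)
    (hqD : ∀ v ∈ (F1 \ F2) ∪ (F2 \ F1), ¬ (G.deleteEdges ↑Fe).Adj q v) :
    vConn G ≤ #(F1 ∩ F2) + #Fe := by
  set D := (F1 \ F2) ∪ (F2 \ F1)
  have hmem : ∀ x, x ∉ F1 ∩ F2 → x ∉ D → x ∉ F1 ∪ F2 := by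
    intro x; simp only [D, mem_union, mem_sdiff, mem_inter]; tauto
  refine vConn_le_card_add_card (P := {x | x ∈ D ∨ ∃ v ∈ D, (G.deleteEdges ↑Fe).Adj x v})
    (q := q) ?_ (Or.inl hp) ?_ ?_ ?_
  rotate_left
  · rintro (hqD' | ⟨v, hv, hqv⟩)
    · exact hq (by simp only [D, mem_union, mem_sdiff] at hqD' ⊢; tauto)
    · exact hqD v hv hqv
  · simp only [D, mem_union, mem_sdiff, mem_inter] at hp ⊢; tauto
  · exact fun h => hq (mem_union_left _ (mem_inter.mp h).1)
  intro x y hxP hxI hyP hyI hxy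
  by_contra hxyFe
  have hHxy : (G.deleteEdges ↑Fe).Adj x y := deleteEdges_adj.mpr ⟨hxy, hxyFe⟩
  simp only [Set.mem_ofPred_eq, not_or, not_exists, not_and] at hxP hyP
  by_cases hxD : x ∈ D
  · exact hyP.2 x hxD hHxy.symm
  obtain ⟨v, hv, hxv⟩ := hxP.resolve_left hxD
  exact not_adj_of_not_mmDistinguishable hnd (hmem x hxI hxD) (hmem y hyI hyP.1) hv hxv hHxy

variable [DecidableRel G.Adj] {k : ℕ}

lemma card_compl_mul_le_of_not_mmDistinguishable (hreg : ∀ v, G.degree v = k)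
    (hFe : ↑Fe ⊆ G.edgeSet) (hnd : ¬ mmDistinguishable (G.deleteEdges ↑Fe) F1 F2)
    (hW : ∀ u ∉ F1 ∪ F2, ∃ v ∈ (F1 \ F2) ∪ (F2 \ F1), (G.deleteEdges ↑Fe).Adj u v) :
    k * #(F1 ∪ F2)ᶜ ≤ k * #(F1 ∪ F2) + 2 * #Fe ∧
      k * #(F1 ∪ F2)ᶜ ≤ k * #(F1 ∩ F2) + 2 * #(F1 ∪ F2)ᶜ + 2 * #Fe := by
  set H := G.deleteEdges ↑Fe
  set W := (F1 ∪ F2)ᶜ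
  have hdeg : ∀ v, H.degree v ≤ k :=
    fun v => (degree_le_of_le (deleteEdges_le _)).trans (hreg v).le
  have hsum : k * #W ≤ ∑ u ∈ W, H.degree u + 2 * #Fe := by
    calc k * #W = ∑ u ∈ W, G.degree u := by simp [hreg, mul_comm]
      _ = ∑ u ∈ W, (H.degree u + #{e ∈ Fe | u ∈ e}) :=
          sum_congr rfl fun u _ => (degree_deleteEdges_add_card_filter_mem hFe u).symm
      _ ≤ _ := by rw [sum_add_distrib]; linarith [sum_card_filter_mem_le Fe W]
  have hnbr : ∀ u ∈ W, H.degree u = #(H.neighborFinset u ∩ (F1 ∪ F2)) := fun u hu => by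
    rw [← card_neighborFinset_eq_degree,
      inter_eq_left.mpr (neighborFinset_subset_of_not_mmDistinguishable hnd (mem_compl.mp hu)
        (hW u (mem_compl.mp hu)))]
  constructor
  · calc k * #W ≤ ∑ u ∈ W, #(H.neighborFinset u ∩ (F1 ∪ F2)) + 2 * #Fe := by
          rwa [← sum_congr rfl hnbr]
      _ ≤ k * #(F1 ∪ F2) + 2 * #Fe := by
          gcongr; exact sum_card_neighborFinset_inter_le hdeg _ _
  · calc k * #W ≤ ∑ u ∈ W, (#(H.neighborFinset u ∩ (F1 ∩ F2)) + 2) + 2 * #Fe :=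
          hsum.trans (by
            gcongr with u hu
            exact degree_le_card_neighborFinset_inter_add_two hnd (mem_compl.mp hu)
              (hW u (mem_compl.mp hu)))
      _ ≤ k * #(F1 ∩ F2) + 2 * #W + 2 * #Fe := by
          rw [sum_add_distrib, sum_const, smul_eq_mul, mul_comm #W]
          gcongr
          exact sum_card_neighborFinset_inter_le hdeg _ _

theorem mmDistinguishable_deleteEdges {h : ℕ} (hk : 3 ≤ k) (hreg : ∀ v, G.degree v = k)
    (hconn : k ≤ vConn G) (hh : 2 * h + 1 ≤ k) (hV : 2 * (k - h) + 3 ≤ Fintype.card V)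
    (hFeE : ↑Fe ⊆ G.edgeSet) (hFe : #Fe ≤ h) (hne : F1 ≠ F2) (h1 : #F1 ≤ k - h)
    (h2 : #F2 ≤ k - h) : mmDistinguishable (G.deleteEdges ↑Fe) F1 F2 := by
  by_contra hnd
  by_cases hW : ∀ u ∉ F1 ∪ F2, ∃ v ∈ (F1 \ F2) ∪ (F2 \ F1), (G.deleteEdges ↑Fe).Adj u v
  · obtain ⟨hS, hI⟩ := card_compl_mul_le_of_not_mmDistinguishable hreg hFeE hnd hW
    have hn := card_add_card_compl (F1 ∪ F2)
    have hSI := card_union_add_card_inter F1 F2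
    set w := #(F1 ∪ F2)ᶜ
    obtain ⟨c, rfl⟩ : ∃ c, k = c + 2 := ⟨k - 2, by omega⟩
    -- the first bound gives `w ≤ |F₁ ∪ F₂|`, hence `|F₁ ∩ F₂| ≤ k - h - 2`,
    -- which the second bound forbids since `w ≥ |F₁ ∩ F₂| + 3`
    have hwS : w ≤ #(F1 ∪ F2) := by
      by_contra! hlt
      linarith [Nat.mul_le_mul_left (c + 2) hlt]
    have hwI : #(F1 ∩ F2) + 3 ≤ w := by omega
    have hIh : #(F1 ∩ F2) + h ≤ c := by omega
    linarith [Nat.mul_le_mul_left c hwI]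
  · push Not at hW
    obtain ⟨q, hq, hqD⟩ := hW
    obtain ⟨p, hp⟩ : ((F1 \ F2) ∪ (F2 \ F1)).Nonempty := by
      rw [nonempty_iff_ne_empty, Ne, union_eq_empty, sdiff_eq_empty_iff_subset,
        sdiff_eq_empty_iff_subset]
      exact fun h => hne (h.1.antisymm h.2)
    have hcut := vConn_le_of_not_mmDistinguishable hnd hp hq hqD
    have hIF1 := card_inter_add_card_sdiff F1 F2
    have hIF2 := card_inter_add_card_sdiff F2 F1
    rw [inter_comm] at hIF2
    rcases mem_union.mp hp with hp | hp <;> have := card_pos.mpr ⟨p, hp⟩ <;> omega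

end DeleteEdges

end SimpleGraph

/-- A $k$-regular $k$-connected graph $G$ with $|V| ≥ 2(k-h)+3$, $k ≥ 3$, has
$t_h^e(G) = k - h$ under the MM* model for $0 ≤ h ≤ ⌊(k-1)/2⌋$. -/
theorem mm_regular_connected [Fintype V] [DecidableEq V] (G : SimpleGraph V)
    [DecidableRel G.Adj] (k h : ℕ) (hk : 3 ≤ k) (hreg : ∀ v : V, G.degree v = k)
    (hconn : k ≤ vConn G) (hh : h ≤ (k - 1) / 2)
    (hV : 2 * (k - h) + 3 ≤ Fintype.card V) :
    mmTolDiag G h = k - h := by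
  have hh' : 2 * h + 1 ≤ k := by omega
  refine IsGreatest.csSup_eq ⟨fun Fe hFeE hFe F1 F2 hne h1 h2 =>
    mmDistinguishable_deleteEdges hk hreg hconn hh' hV hFeE hFe hne h1 h2, fun s hs => ?_⟩
  obtain ⟨v⟩ : Nonempty V := Fintype.card_pos_iff.mp (by omega)
  obtain ⟨Fe, hFeE, hFe, hdeg⟩ :=
    exists_deleteEdges_degree_add_eq v ((by omega : h ≤ k).trans_eq (hreg v).symm)
  rw [hreg v] at hdeg
  by_contra! hlt
  exact not_mmDiagnosable_of_degree_lt (v := v) (by omega) (hs Fe hFeE hFe.le)
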